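/- For a Euclidean distance matrix D of n points in R^d with n > d+2 and σ > 0, the second largest eigenvalue of D − σ(11^T − I) equals σ. Consequently D = C + λ_2(C)·J where C = D − σ_D J is the component of D orthogonal to J and λ_2 denotes the second largest eigenvalue. -/

import Mathlib

/-!
For `z` with `∑ zᵢ = 0` one has `zᵀ D z = -2 ‖∑ zᵢ xᵢ‖²` and `zᵀ J z = -‖z‖²`, so the quadratic
form of `H = D - σ J` is `σ ‖z‖² - 2 ‖∑ zᵢ xᵢ‖²` there. Hence it is at most `σ ‖z‖²` on the
hyperplane `∑ zᵢ = 0` (dimension `n - 1`), and exactly `σ ‖z‖²` on the affine dependencies of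
the points (`∑ zᵢ = 0`, `∑ zᵢ xᵢ = 0`; dimension at least `n - d - 1 ≥ 2`). By the
Courant–Fischer principle `H` has at most one eigenvalue above `σ` and at least two eigenvalues
`≥ σ`, i.e. `λ₂(H) = σ`. For `σ = σ_D` this says `λ₂(C) = σ_D`.
-/

open Matrix BigOperators

/-- The second largest value of a finite family of reals: the largest `μ` that is
dominated by at least two of the values. -/
noncomputable def secondLargest {n : ℕ} (f : Fin n → ℝ) : ℝ :=
  sSup {μ : ℝ | ∃ i j : Fin n, i ≠ j ∧ μ ≤ f i ∧ μ ≤ f j}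

open Module
open scoped RealInnerProductSpace

section CourantFischer

variable {ι E : Type*} [Fintype ι] [NormedAddCommGroup E] [InnerProductSpace ℝ E]
  {T : E →ₗ[ℝ] E} {b : OrthonormalBasis ι ℝ E} {μ : ι → ℝ}

theorem inner_apply_sub_mul_norm_sq_eq_sum (hT : ∀ i, T (b i) = μ i • b i) (σ : ℝ) (z : E) :
    ⟪z, T z⟫ - σ * ‖z‖ ^ 2 = ∑ i, (μ i - σ) * ⟪b i, z⟫ ^ 2 := by
  have hTz : T z = ∑ i, (μ i * ⟪b i, z⟫) • b i := by
    conv_lhs => rw [← b.sum_repr' z]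
    simp only [map_sum, map_smul, hT, smul_smul, mul_comm]
  rw [hTz, inner_sum, ← b.sum_sq_inner_right z, Finset.mul_sum, ← Finset.sum_sub_distrib]
  refine Finset.sum_congr rfl fun i _ => ?_
  rw [real_inner_smul_right, real_inner_comm]
  ring

/-- The coordinates along the eigenvectors with eigenvalue `≥ σ` are injective on `V`: a vector
of `V` orthogonal to all of them would have `⟪z, T z⟫ < σ ‖z‖²` unless `z = 0`. -/
theorem finrank_le_card_le_eigenvalue (hT : ∀ i, T (b i) = μ i • b i) (V : Submodule ℝ E)
    {σ : ℝ} (hV : ∀ z ∈ V, σ * ‖z‖ ^ 2 ≤ ⟪z, T z⟫) :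
    finrank ℝ V ≤ Fintype.card {i // σ ≤ μ i} := by
  let f : V →ₗ[ℝ] ({i // σ ≤ μ i} → ℝ) :=
    LinearMap.pi (fun i => innerₗ E (b i)) ∘ₗ V.subtype
  have hf : Function.Injective f := by
    rw [← LinearMap.ker_eq_bot, LinearMap.ker_eq_bot']
    rintro ⟨z, hzV⟩ hz
    have hzero : ∀ i, σ ≤ μ i → ⟪b i, z⟫ = 0 := fun i hi => congrFun hz ⟨i, hi⟩
    have hterm : ∀ i ∈ Finset.univ, (μ i - σ) * ⟪b i, z⟫ ^ 2 ≤ 0 := by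
      intro i _
      by_cases hi : σ ≤ μ i
      · simp [hzero i hi]
      · exact mul_nonpos_of_nonpos_of_nonneg (by linarith) (sq_nonneg _)
    have hsum := inner_apply_sub_mul_norm_sq_eq_sum hT σ z
    have hall := (Finset.sum_eq_zero_iff_of_nonpos hterm).mp
      (le_antisymm (Finset.sum_nonpos hterm) (hsum ▸ sub_nonneg.mpr (hV z hzV)))
    have hnorm : ‖z‖ ^ 2 = 0 := by
      rw [← b.sum_sq_inner_right z]
      refine Finset.sum_eq_zero fun i _ => ?_
      by_cases hi : σ ≤ μ i
      · simp [hzero i hi]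
      · simpa [sub_eq_zero, (lt_of_not_ge hi).ne] using hall i (Finset.mem_univ i)
    simpa using hnorm
  simpa using LinearMap.finrank_le_finrank_of_injective hf

theorem card_lt_eigenvalue_add_finrank_le (hT : ∀ i, T (b i) = μ i • b i) (V : Submodule ℝ E)
    {σ : ℝ} (hV : ∀ z ∈ V, ⟪z, T z⟫ ≤ σ * ‖z‖ ^ 2) :
    Fintype.card {i // σ < μ i} + finrank ℝ V ≤ Fintype.card ι := by
  have hle := finrank_le_card_le_eigenvalue (T := -T) (b := b) (μ := -μ) (σ := -σ)
    (fun i => by simp [hT]) V fun z hz => by simpa [inner_neg_right] using hV z hz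
  simp only [Pi.neg_apply, neg_le_neg_iff] at hle
  have hcompl := Fintype.card_subtype_compl (fun i => μ i ≤ σ)
  simp only [not_le] at hcompl
  have := Fintype.card_subtype_le (fun i => μ i ≤ σ)
  omega

end CourantFischer

theorem Matrix.IsHermitian.toLpLin_eigenvectorBasis {𝕜 ι : Type*} [RCLike 𝕜] [Fintype ι]
    [DecidableEq ι] {A : Matrix ι ι 𝕜} (hA : A.IsHermitian) (i : ι) :
    toLpLin 2 2 A (hA.eigenvectorBasis i) = hA.eigenvalues i • hA.eigenvectorBasis i := by
  rw [toLpLin_apply, hA.mulVec_eigenvectorBasis, WithLp.toLp_smul, WithLp.toLp_ofLp]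

theorem inner_toLpLin_self {ι : Type*} [Fintype ι] [DecidableEq ι] (A : Matrix ι ι ℝ)
    (z : EuclideanSpace ℝ ι) : ⟪z, toLpLin 2 2 A z⟫ = ∑ i, ∑ j, z i * z j * A i j := by
  simp only [toLpLin_apply, EuclideanSpace.inner_eq_star_dotProduct, dotProduct, mulVec,
    Finset.sum_mul, star_trivial]
  exact Finset.sum_congr rfl fun i _ => Finset.sum_congr rfl fun j _ => by ring

theorem sub_finrank_le_finrank_ker {K M N : Type*} [DivisionRing K] [AddCommGroup M]
    [Module K M] [AddCommGroup N] [Module K N] [FiniteDimensional K M] [FiniteDimensional K N]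
    (f : M →ₗ[K] N) : finrank K M - finrank K N ≤ finrank K (LinearMap.ker f) := by
  have := f.finrank_range_add_finrank_ker
  have := (LinearMap.range f).finrank_le
  omega

theorem secondLargest_eq_of_card {n : ℕ} {f : Fin n → ℝ} {σ : ℝ}
    (hge : 2 ≤ Fintype.card {i // σ ≤ f i}) (hgt : Fintype.card {i // σ < f i} ≤ 1) :
    secondLargest f = σ := by
  refine IsGreatest.csSup_eq ⟨?_, ?_⟩
  · obtain ⟨⟨i, hi⟩, ⟨j, hj⟩, hij⟩ := Fintype.one_lt_card_iff.mp hge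
    exact ⟨i, j, fun h => hij (Subtype.ext h), hi, hj⟩
  · rintro μ ⟨i, j, hij, hi, hj⟩
    by_contra! hμ
    exact hij (congrArg Subtype.val
      (Fintype.card_le_one_iff.mp hgt ⟨i, hμ.trans_le hi⟩ ⟨j, hμ.trans_le hj⟩))

section EuclideanDistanceMatrix

variable {ι F : Type*} [Fintype ι] [NormedAddCommGroup F] [InnerProductSpace ℝ F]

def sqDistMatrix (x : ι → F) : Matrix ι ι ℝ := Matrix.of fun i j => ‖x i - x j‖ ^ 2

def offDiagOnes [DecidableEq ι] : Matrix ι ι ℝ := Matrix.of fun i j => if i = j then 0 else 1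

theorem sum_sum_mul_norm_sub_sq (x : ι → F) (z : ι → ℝ) :
    ∑ i, ∑ j, z i * z j * ‖x i - x j‖ ^ 2
      = 2 * (∑ i, z i) * (∑ i, z i * ‖x i‖ ^ 2) - 2 * ‖∑ i, z i • x i‖ ^ 2 := by
  have hnorm : ‖∑ i, z i • x i‖ ^ 2 = ∑ i, ∑ j, z i * z j * ⟪x i, x j⟫ := by
    simp only [← real_inner_self_eq_norm_sq, sum_inner, inner_sum, real_inner_smul_left,
      real_inner_smul_right]
    rw [Finset.sum_comm]
    exact Finset.sum_congr rfl fun i _ => Finset.sum_congr rfl fun j _ => by ring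
  have hexpand : ∀ i j, z i * z j * ‖x i - x j‖ ^ 2
      = z i * ‖x i‖ ^ 2 * z j + z i * (z j * ‖x j‖ ^ 2) - 2 * (z i * z j * ⟪x i, x j⟫) := by
    intro i j
    rw [norm_sub_sq_real]
    ring
  simp only [hexpand, hnorm, Finset.sum_add_distrib, Finset.sum_sub_distrib, ← Finset.mul_sum,
    ← Finset.sum_mul]
  ring

theorem sum_sum_mul_offDiagOnes [DecidableEq ι] (z : ι → ℝ) :
    ∑ i, ∑ j, z i * z j * offDiagOnes i j = (∑ i, z i) ^ 2 - ∑ i, z i ^ 2 := by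
  have hsplit : ∀ i j, z i * z j * offDiagOnes i j
      = z i * z j - if i = j then z i * z j else 0 := by
    intro i j
    simp only [offDiagOnes, of_apply]
    split_ifs <;> ring
  simp only [hsplit, Finset.sum_sub_distrib, Finset.sum_ite_eq, Finset.mem_univ, if_true, sq,
    Finset.sum_mul_sum]

theorem inner_toLpLin_sqDistMatrix_sub_smul_offDiagOnes [DecidableEq ι] (x : ι → F) (σ : ℝ)
    {z : EuclideanSpace ℝ ι} (hz : ∑ i, z i = 0) :
    ⟪z, toLpLin 2 2 (sqDistMatrix x - σ • offDiagOnes) z⟫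
      = σ * ‖z‖ ^ 2 - 2 * ‖∑ i, z i • x i‖ ^ 2 := by
  simp only [inner_toLpLin_self, Matrix.sub_apply, Matrix.smul_apply, smul_eq_mul, mul_sub,
    Finset.sum_sub_distrib, mul_left_comm _ σ, ← Finset.mul_sum, sqDistMatrix, of_apply,
    sum_sum_mul_norm_sub_sq, sum_sum_mul_offDiagOnes, hz, EuclideanSpace.real_norm_sq_eq]
  ring

/-- Its kernel is the space of affine dependencies of `x`. -/
def liftCombination (x : ι → F) : EuclideanSpace ℝ ι →ₗ[ℝ] ℝ × F :=
  Fintype.linearCombination ℝ (fun i => ((1 : ℝ), x i)) ∘ₗ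
    (WithLp.linearEquiv 2 ℝ (ι → ℝ)).toLinearMap

theorem liftCombination_apply (x : ι → F) (z : EuclideanSpace ℝ ι) :
    liftCombination x z = (∑ i, z i, ∑ i, z i • x i) := by
  ext <;> simp [liftCombination, Fintype.linearCombination_apply, Prod.fst_sum, Prod.snd_sum]

variable {n : ℕ} (x : Fin n → F) (σ : ℝ)
  (hH : (sqDistMatrix x - σ • offDiagOnes).IsHermitian)

theorem two_le_card_le_eigenvalues_sqDistMatrix_sub_smul_offDiagOnes [FiniteDimensional ℝ F]
    (hn : finrank ℝ F + 2 < n) : 2 ≤ Fintype.card {i // σ ≤ hH.eigenvalues i} := by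
  have hdim := sub_finrank_le_finrank_ker (liftCombination x)
  simp only [finrank_euclideanSpace_fin, finrank_prod, finrank_self] at hdim
  refine le_trans (by omega : 2 ≤ finrank ℝ (LinearMap.ker (liftCombination x)))
    (finrank_le_card_le_eigenvalue hH.toLpLin_eigenvectorBasis _ fun z hz => ?_)
  obtain ⟨hsum, hcomb⟩ : ∑ i, z i = 0 ∧ ∑ i, z i • x i = 0 := by
    simpa [liftCombination_apply, Prod.ext_iff] using hz
  rw [inner_toLpLin_sqDistMatrix_sub_smul_offDiagOnes x σ hsum, hcomb]
  simp

theorem card_lt_eigenvalues_sqDistMatrix_sub_smul_offDiagOnes_le_one :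
    Fintype.card {i // σ < hH.eigenvalues i} ≤ 1 := by
  have hdim := sub_finrank_le_finrank_ker (LinearMap.fst ℝ ℝ F ∘ₗ liftCombination x)
  simp only [finrank_euclideanSpace_fin, finrank_self] at hdim
  suffices Fintype.card {i // σ < hH.eigenvalues i} + (n - 1) ≤ n by omega
  calc _ ≤ Fintype.card {i // σ < hH.eigenvalues i}
        + finrank ℝ (LinearMap.ker (LinearMap.fst ℝ ℝ F ∘ₗ liftCombination x)) :=
        Nat.add_le_add_left hdim _
    _ ≤ Fintype.card (Fin n) :=
        card_lt_eigenvalue_add_finrank_le hH.toLpLin_eigenvectorBasis _ fun z hz => ?_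
    _ = n := Fintype.card_fin n
  have hsum : ∑ i, z i = 0 := by simpa [liftCombination_apply] using hz
  rw [inner_toLpLin_sqDistMatrix_sub_smul_offDiagOnes x σ hsum]
  exact sub_le_self _ (by positivity)

theorem secondLargest_eigenvalues_sqDistMatrix_sub_smul_offDiagOnes [FiniteDimensional ℝ F]
    (hn : finrank ℝ F + 2 < n) : secondLargest hH.eigenvalues = σ :=
  secondLargest_eq_of_card (two_le_card_le_eigenvalues_sqDistMatrix_sub_smul_offDiagOnes x σ hH hn)
    (card_lt_eigenvalues_sqDistMatrix_sub_smul_offDiagOnes_le_one x σ hH)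

end EuclideanDistanceMatrix

theorem edm_recovery_from_centered_general (n d : ℕ) (hn : d + 2 < n)
    (x : Fin n → EuclideanSpace ℝ (Fin d))
    (D J C : Matrix (Fin n) (Fin n) ℝ)
    (hD : D = Matrix.of fun i j => ‖x i - x j‖ ^ 2)
    (hJ : J = (Matrix.of fun a b => if a = b then (0 : ℝ) else 1))
    (hC : C = D - (Matrix.trace (D * J) / ((n : ℝ) * ((n : ℝ) - 1))) • J)
    (σ : ℝ) :
    (∀ hH : (D - σ • J).IsHermitian, secondLargest hH.eigenvalues = σ) ∧
    (∀ hHC : C.IsHermitian, D = C + secondLargest hHC.eigenvalues • J) := by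
  subst hD hJ hC
  have hdim : finrank ℝ (EuclideanSpace ℝ (Fin d)) + 2 < n := by simpa using hn
  refine ⟨fun hH => secondLargest_eigenvalues_sqDistMatrix_sub_smul_offDiagOnes x σ hH hdim,
    fun hHC => ?_⟩
  rw [show secondLargest hHC.eigenvalues = _ from
    secondLargest_eigenvalues_sqDistMatrix_sub_smul_offDiagOnes x _ hHC hdim, sub_add_cancel]

/-- For a Euclidean distance matrix `D` of `n` points in `ℝ^d` with `n > d + 2` and any
`σ > 0`, the second largest eigenvalue of `D - σ(11ᵀ - I)` equals `σ`.  Consequently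
`D = C + λ₂(C) J` where `C = D - σ_D J` is the component of `D` orthogonal to `J`. -/
theorem edm_recovery_from_centered (n d : ℕ) (hn : d + 2 < n)
    (x : Fin n → EuclideanSpace ℝ (Fin d))
    (D J C : Matrix (Fin n) (Fin n) ℝ)
    (hD : D = Matrix.of fun i j => ‖x i - x j‖ ^ 2)
    (hJ : J = (Matrix.of fun a b => if a = b then (0 : ℝ) else 1))
    (hC : C = D - (Matrix.trace (D * J) / ((n : ℝ) * ((n : ℝ) - 1))) • J)
    (σ : ℝ) (hσ : 0 < σ) :
    (∀ hH : (D - σ • J).IsHermitian, secondLargest hH.eigenvalues = σ) ∧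
    (∀ hHC : C.IsHermitian, D = C + secondLargest hHC.eigenvalues • J) :=
  edm_recovery_from_centered_general n d hn x D J C hD hJ hC σ
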